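/- arXiv:1406.6848 — 2 statements merged into one kernel-verified Lean document; each statement's English description precedes it below -/
import Mathlib

section
/- For every real number t with |t| < π, the series Σ_{r≥0} E_{2r+1}(0) · t^{2r}/(2r)! converges and equals −(1/2)·sech²(t/2). -/
open Complex MeasureTheory
open scoped Real

noncomputable section

/-- `p(n)`: the number of partitions of `n`. -/
def partitionCount (n : ℕ) : ℕ := Fintype.card (Nat.Partition n)

/-- The rank of a partition: its largest part minus the number of its parts. -/
def partitionRank {n : ℕ} (lam : Nat.Partition n) : ℤ :=
  (lam.parts.sup : ℤ) - lam.parts.card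

/-- `N(m,n)`: the number of partitions of `n` with rank `m`. -/
def rankCount (m : ℤ) (n : ℕ) : ℕ :=
  Fintype.card {lam : Nat.Partition n // partitionRank lam = m}

/-- `sech` -/
def sech (t : ℝ) : ℝ := 1 / Real.cosh t

/-- `β = π / √(6n)` -/
def betav (n : ℕ) : ℝ := π / Real.sqrt (6 * n)

/-- `s = β (1 + i x m^{-1/3})` -/
def sval (n m : ℕ) (x : ℝ) : ℂ :=
  (betav n : ℂ) * (1 + I * (x : ℂ) * ((m : ℝ) ^ (-(1 : ℝ)/3) : ℝ))

/-- The rank generating function `R(z; τ)`. -/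
def rankGen (z τ : ℂ) : ℂ :=
  ∑' n : ℕ, ∑' m : ℤ,
    (rankCount m n : ℂ) * Complex.exp (2 * π * I * z) ^ m * Complex.exp (2 * π * I * τ) ^ n

/-- The Dedekind eta function. -/
def dedekindEta (τ : ℂ) : ℂ :=
  Complex.exp (π * I * τ / 12) * ∏' n : ℕ, (1 - Complex.exp (2 * π * I * τ) ^ (n + 1))

/-- The Jacobi theta function `θ(z;τ)`. -/
def thetaFn (z τ : ℂ) : ℂ :=
  I * Complex.exp (π * I * τ / 4) * Complex.exp (π * I * z) *
    ∏' n : ℕ,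
      ((1 - Complex.exp (2 * π * I * τ) ^ (n + 1)) *
        (1 - Complex.exp (2 * π * I * z) * Complex.exp (2 * π * I * τ) ^ (n + 1)) *
        (1 - (Complex.exp (2 * π * I * z))⁻¹ * Complex.exp (2 * π * I * τ) ^ n))

/-- The Appell–Lerch sum `A₁(u,v;τ)`. -/
def A1 (u v τ : ℂ) : ℂ :=
  Complex.exp (π * I * u) *
    ∑' n : ℤ, (-1 : ℂ) ^ n * Complex.exp (2 * π * I * τ) ^ ((n ^ 2 + n) / 2) *
      Complex.exp (2 * π * I * n * v) /
        (1 - Complex.exp (2 * π * I * u) * Complex.exp (2 * π * I * τ) ^ n)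

/-- The Mordell integral `h(z;τ)`. -/
def mordellH (z τ : ℂ) : ℂ :=
  ∫ w : ℝ, Complex.exp (π * I * τ * w ^ 2 - 2 * π * z * w) / Complex.cosh (π * w)

/-- `R_m(τ)`. -/
def rankGenCoeff (m : ℤ) (τ : ℂ) : ℂ :=
  ∫ z in (-1/2 : ℝ)..(1/2 : ℝ), rankGen z τ * Complex.exp (-2 * π * I * m * z)

/-- `g_m(z;τ)`. -/
def gFun (m : ℕ) (z τ : ℂ) : ℂ :=
  if m % 3 = 0 then
    -A1 (3 * z) τ (3 * τ) * Complex.exp (3 * π * I * z) +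
      A1 (3 * z) (-τ) (3 * τ) * Complex.exp (-3 * π * I * z)
  else if m % 3 = 1 then
    -A1 (3 * z) (-τ) (3 * τ) * Complex.exp (-π * I * z) -
      I * (dedekindEta (3 * τ)) ^ 3 / thetaFn (3 * z) (3 * τ) * Complex.exp (-π * I * z)
  else
    A1 (3 * z) τ (3 * τ) * Complex.exp (π * I * z) +
      I * (dedekindEta (3 * τ)) ^ 3 / thetaFn (3 * z) (3 * τ) * Complex.exp (π * I * z)

/-- `E_k(0)` via the generating function `2e^{xz}/(e^z+1)` at `x = 0`. -/
def eulerZero (k : ℕ) : ℚ :=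
  (k.factorial : ℚ) *
    PowerSeries.coeff k (PowerSeries.C (R := ℚ) 2 * (PowerSeries.exp ℚ + 1)⁻¹)

/-- Generating function of partitions. -/
def partitionGen (q : ℂ) : ℂ := ∏' n : ℕ, (1 - q ^ (n + 1))⁻¹

/-- membership in the lattice `ℤ + ℤτ`. -/
def inLattice (τ w : ℂ) : Prop := ∃ a b : ℤ, w = (a : ℂ) + (b : ℂ) * τ

/-! Write `P = 2 / (eˣ + 1) ∈ ℚ⟦X⟧`, so that `E_k(0) = k! [Xᵏ] P`. Differentiating
`(eˣ + 1) P = 2` gives `(eˣ + 1)² P' = -2eˣ`, and `[Xⁿ] P' = E_{n+1}(0) / n!`. On `|z| < π` the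
function `-2eᶻ / (eᶻ + 1)²` is holomorphic; its Taylor series satisfies the same identity once
multiplied by the everywhere convergent series of `(eᶻ + 1)²`, and cancelling `(eˣ + 1)²` in `ℂ⟦X⟧`
shows that it is `P'`. Hence `∑ E_{n+1}(0) zⁿ / n! = -2eᶻ / (eᶻ + 1)² = -½ sech²(z / 2)`. Finally
`P(x) + P(-x) = 2` forces `E_n(0) = 0` for even `n > 0`, so only the even powers survive. -/

open PowerSeries
open scoped NNReal

section Uniqueness

variable {𝕜 : Type*} [DenselyNormedField 𝕜]

open FormalMultilinearSeries in
lemma hasFPowerSeriesOnBall_ofScalars_of_hasSum {a : ℕ → 𝕜} {F : 𝕜 → 𝕜} {r : ℝ≥0}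
    (hr : 0 < r) (h : ∀ z ∈ Metric.ball (0 : 𝕜) r, HasSum (fun n => a n * z ^ n) (F z)) :
    HasFPowerSeriesOnBall F (ofScalars 𝕜 a) 0 r := by
  refine ⟨?_, by exact_mod_cast hr, fun {y} hy => ?_⟩
  · refine ENNReal.le_of_forall_nnreal_lt fun q hq => ?_
    obtain ⟨z, hqz, hzr⟩ := NormedField.exists_lt_nnnorm_lt 𝕜 (ENNReal.coe_lt_coe.mp hq)
    have hsum := (h z (by simpa using NNReal.coe_lt_coe.mpr hzr)).summable
    refine le_trans (by exact_mod_cast hqz.le) (le_radius_of_tendsto _ (l := 0) ?_)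
    simpa [ofScalars_norm] using hsum.tendsto_atTop_zero.norm
  · rw [Metric.eball_coe] at hy
    simpa [ofScalars_apply_eq, mul_comm] using h y hy

lemma PowerSeries.eq_of_hasSum_coeff {φ ψ : 𝕜⟦X⟧} {F : 𝕜 → 𝕜} {r : ℝ≥0} (hr : 0 < r)
    (hφ : ∀ z ∈ Metric.ball (0 : 𝕜) r, HasSum (fun n => coeff n φ * z ^ n) (F z))
    (hψ : ∀ z ∈ Metric.ball (0 : 𝕜) r, HasSum (fun n => coeff n ψ * z ^ n) (F z)) : φ = ψ := by
  have hφ' := (hasFPowerSeriesOnBall_ofScalars_of_hasSum hr hφ).hasFPowerSeriesAt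
  have hψ' := (hasFPowerSeriesOnBall_ofScalars_of_hasSum hr hψ).hasFPowerSeriesAt
  ext n
  exact congrFun (FormalMultilinearSeries.ofScalars_series_injective 𝕜 𝕜
    (hφ'.eq_formalMultilinearSeries hψ')) n

end Uniqueness

namespace PowerSeries

section AbsoluteConvergence

variable {𝕜 : Type*} [NontriviallyNormedField 𝕜]

def HasAbsSumAt (φ : 𝕜⟦X⟧) (z s : 𝕜) : Prop :=
  HasSum (fun n => coeff n φ * z ^ n) s ∧ Summable fun n => ‖coeff n φ * z ^ n‖

lemma hasAbsSumAt_C (a z : 𝕜) : HasAbsSumAt (C a) z a := by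
  have hsupp : ∀ n ≠ 0, coeff n (C a) * z ^ n = 0 := fun n hn => by simp [coeff_C, hn]
  refine ⟨by simpa using hasSum_single 0 hsupp, ?_⟩
  exact (hasSum_single 0 fun n hn => by simp [hsupp n hn]).summable

lemma HasAbsSumAt.add {φ ψ : 𝕜⟦X⟧} {z s t : 𝕜} (hφ : HasAbsSumAt φ z s)
    (hψ : HasAbsSumAt ψ z t) : HasAbsSumAt (φ + ψ) z (s + t) := by
  refine ⟨by simpa [add_mul] using hφ.1.add hψ.1, ?_⟩
  refine .of_nonneg_of_le (fun n => norm_nonneg _) (fun n => ?_) (hφ.2.add hψ.2)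
  simpa [add_mul] using norm_add_le (coeff n φ * z ^ n) (coeff n ψ * z ^ n)

lemma HasAbsSumAt.mul [CompleteSpace 𝕜] {φ ψ : 𝕜⟦X⟧} {z s t : 𝕜} (hφ : HasAbsSumAt φ z s)
    (hψ : HasAbsSumAt ψ z t) : HasAbsSumAt (φ * ψ) z (s * t) := by
  have hterm : ∀ n, coeff n (φ * ψ) * z ^ n =
      ∑ ij ∈ Finset.HasAntidiagonal.antidiagonal n,
        coeff ij.1 φ * z ^ ij.1 * (coeff ij.2 ψ * z ^ ij.2) := by
    intro n
    rw [coeff_mul, Finset.sum_mul]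
    refine Finset.sum_congr rfl fun ij hij => ?_
    rw [← Finset.HasAntidiagonal.mem_antidiagonal.mp hij, pow_add]
    ring
  have hsum := summable_norm_sum_mul_antidiagonal_of_summable_norm hφ.2 hψ.2
  simp_rw [← hterm] at hsum
  have hprod := tsum_mul_tsum_eq_tsum_sum_antidiagonal_of_summable_norm hφ.2 hψ.2
  rw [hφ.1.tsum_eq, hψ.1.tsum_eq] at hprod
  simp_rw [← hterm] at hprod
  exact ⟨hprod ▸ hsum.of_norm.hasSum, hsum⟩

end AbsoluteConvergence

lemma hasAbsSumAt_exp (z : ℂ) : HasAbsSumAt (exp ℂ) z (Complex.exp z) := by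
  have hcoeff : ∀ n, coeff n (exp ℂ) * z ^ n = z ^ n / n.factorial := fun n => by
    simp [coeff_exp, div_eq_inv_mul]
  simp_rw [HasAbsSumAt, hcoeff]
  refine ⟨?_, ?_⟩
  · rw [Complex.exp_eq_exp_ℂ]
    exact NormedSpace.expSeries_div_hasSum_exp z
  · simpa [norm_div, norm_pow] using Real.summable_pow_div_factorial ‖z‖

lemma exp_add_one_ne_zero (A : Type*) [CommRing A] [Algebra ℚ A] [Nontrivial A] :
    exp A + 1 ≠ 0 := fun h => by
  have htwo : algebraMap ℚ A 2 ≠ 0 :=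
    (map_ne_zero_iff _ (algebraMap ℚ A).injective).mpr two_ne_zero
  have h0 := congrArg constantCoeff h
  simp only [map_add, constantCoeff_exp, map_one, map_zero, one_add_one_eq_two] at h0
  exact htwo (by rwa [map_ofNat])

lemma hasSum_coeff_of_mul_eq {ψ φ χ : ℂ⟦X⟧} (hmul : ψ * φ = χ) (hψ : ψ ≠ 0) {r : ℝ≥0}
    {f g h : ℂ → ℂ} (hf : DifferentiableOn ℂ f (Metric.ball 0 r))
    (hg : ∀ z ∈ Metric.ball (0 : ℂ) r, HasAbsSumAt ψ z (g z))
    (hh : ∀ z ∈ Metric.ball (0 : ℂ) r, HasSum (fun n => coeff n χ * z ^ n) (h z))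
    (hfgh : ∀ z ∈ Metric.ball (0 : ℂ) r, g z * f z = h z) {z : ℂ} (hz : z ∈ Metric.ball 0 r) :
    HasSum (fun n => coeff n φ * z ^ n) (f z) := by
  obtain ⟨s, hzs, hsr⟩ : ∃ s : ℝ≥0, ‖z‖₊ < s ∧ s < r :=
    exists_between (by simpa [← NNReal.coe_lt_coe] using hz)
  have hs : 0 < s := pos_of_gt hzs
  have hball : Metric.ball (0 : ℂ) s ⊆ Metric.ball 0 r :=
    Metric.ball_subset_ball (by exact_mod_cast hsr.le)
  have hp :=
    (hf.mono (Metric.closedBall_subset_ball (by exact_mod_cast hsr))).hasFPowerSeriesOnBall hs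
  set p := cauchyPowerSeries f 0 s
  have hc : ∀ w ∈ Metric.ball (0 : ℂ) s, HasAbsSumAt (mk p.coeff) w (f w) := by
    intro w hw
    rw [← Metric.eball_coe] at hw
    refine ⟨?_, ?_⟩
    · simpa [FormalMultilinearSeries.apply_eq_pow_smul_coeff, mul_comm] using hp.hasSum hw
    · simpa [FormalMultilinearSeries.apply_eq_pow_smul_coeff, mul_comm] using
        p.summable_norm_apply (Metric.eball_subset_eball hp.r_le hw)
  have hcφ : mk p.coeff = φ := by
    refine mul_left_cancel₀ hψ (eq_of_hasSum_coeff hs (F := h) (fun w hw => ?_)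
      (fun w hw => hmul ▸ hh w (hball hw)))
    rw [← hfgh w (hball hw)]
    exact ((hg w (hball hw)).mul (hc w hw)).1
  exact hcφ ▸ (hc z (by simpa [← NNReal.coe_lt_coe] using hzs)).1

end PowerSeries

def eulerSeries : ℚ⟦X⟧ := C 2 * (exp ℚ + 1)⁻¹

lemma coeff_eulerSeries (k : ℕ) : coeff k eulerSeries = eulerZero k / k.factorial := by
  rw [eulerZero, eulerSeries]
  field_simp

lemma exp_add_one_mul_eulerSeries : (exp ℚ + 1) * eulerSeries = C 2 := by
  have hunit : (exp ℚ + 1) * (exp ℚ + 1)⁻¹ = 1 :=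
    PowerSeries.mul_inv_cancel _ (by simp [constantCoeff_exp])
  rw [eulerSeries, mul_left_comm, hunit, mul_one]

lemma eulerSeries_add_evalNegHom : eulerSeries + evalNegHom eulerSeries = C 2 := by
  have hneg : (evalNegHom (exp ℚ) + 1) * evalNegHom eulerSeries = C 2 := by
    have hC : evalNegHom (C (2 : ℚ)) = C 2 := by
      ext n
      rw [evalNegHom, coeff_rescale, coeff_C]
      split_ifs with h <;> simp [h]
    have h := congrArg evalNegHom exp_add_one_mul_eulerSeries
    rwa [map_mul, map_add, map_one, hC] at h
  refine mul_left_cancel₀ (exp_add_one_ne_zero ℚ) ?_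
  linear_combination exp_add_one_mul_eulerSeries + exp ℚ * hneg -
    evalNegHom eulerSeries * exp_mul_exp_neg_eq_one (A := ℚ)

lemma eulerZero_eq_zero_of_even {n : ℕ} (hn : Even n) (h0 : n ≠ 0) : eulerZero n = 0 := by
  have h := congrArg (coeff n) eulerSeries_add_evalNegHom
  rw [map_add, evalNegHom, coeff_rescale, hn.neg_one_pow, one_mul, ← two_mul, coeff_C,
    if_neg h0, coeff_eulerSeries] at h
  simpa [Nat.factorial_ne_zero] using h

lemma sq_exp_add_one_mul_derivative_eulerSeries :
    (exp ℚ + 1) ^ 2 * d⁄dX ℚ eulerSeries = C (-2) * exp ℚ := by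
  have h := congrArg (d⁄dX ℚ) exp_add_one_mul_eulerSeries
  rw [Derivation.leibniz, map_add, derivative_exp, Derivation.map_one_eq_zero, add_zero,
    derivative_C, smul_eq_mul, smul_eq_mul] at h
  rw [map_neg]
  linear_combination (exp ℚ + 1) * h - exp ℚ * exp_add_one_mul_eulerSeries

lemma coeff_derivative_eulerSeries (n : ℕ) :
    coeff n (d⁄dX ℚ eulerSeries) = eulerZero (n + 1) / n.factorial := by
  rw [coeff_derivative, coeff_eulerSeries, Nat.factorial_succ]
  push_cast
  field_simp

lemma Complex.exp_add_one_ne_zero_of_norm_lt_pi {z : ℂ} (hz : ‖z‖ < π) :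
    Complex.exp z + 1 ≠ 0 := by
  intro h
  obtain ⟨n, hn⟩ := Complex.exp_eq_one_iff.mp
    (show Complex.exp (z - π * I) = 1 by
      rw [Complex.exp_sub, Complex.exp_pi_mul_I, eq_neg_of_add_eq_zero_left h, neg_div_neg_eq,
        div_one])
  have hz' : z = ((2 * n + 1 : ℤ) : ℂ) * (π * I) := by
    push_cast
    linear_combination hn
  have hodd : (1 : ℝ) ≤ |((2 * n + 1 : ℤ) : ℝ)| := by
    exact_mod_cast Int.one_le_abs (by omega)
  have hnorm : ‖z‖ = |((2 * n + 1 : ℤ) : ℝ)| * π := by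
    rw [hz', norm_mul, Complex.norm_intCast, norm_mul, Complex.norm_I, mul_one,
      Complex.norm_real, Real.norm_of_nonneg Real.pi_pos.le]
  nlinarith [Real.pi_pos]

lemma sech_half_sq (t : ℝ) : sech (t / 2) ^ 2 = 4 * Real.exp t / (Real.exp t + 1) ^ 2 := by
  have hexp : Real.exp t = Real.exp (t / 2) ^ 2 := by
    rw [sq, ← Real.exp_add, add_halves]
  rw [sech, Real.cosh_eq, Real.exp_neg, hexp]
  field_simp
  ring

lemma HasSum.comp_two_mul_of_odd_eq_zero {M : Type*} [AddCommMonoid M] [TopologicalSpace M]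
    {f : ℕ → M} {a : M} (hf : HasSum f a) (hodd : ∀ k, f (2 * k + 1) = 0) :
    HasSum (fun k => f (2 * k)) a := by
  refine ((mul_right_injective₀ two_ne_zero).hasSum_iff fun n hn => ?_).mpr hf
  rcases Nat.even_or_odd' n with ⟨k, rfl | rfl⟩
  · exact absurd ⟨k, rfl⟩ hn
  · exact hodd k

lemma hasSum_eulerZero_succ {z : ℂ} (hz : ‖z‖ < π) :
    HasSum (fun n => (eulerZero (n + 1) / n.factorial : ℂ) * z ^ n)
      (-2 * Complex.exp z / (Complex.exp z + 1) ^ 2) := by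
  have hmul := congrArg (map (algebraMap ℚ ℂ)) sq_exp_add_one_mul_derivative_eulerSeries
  simp only [map_mul, map_pow, map_add, map_one, map_exp, map_C] at hmul
  have hsq : ∀ w : ℂ, HasAbsSumAt ((exp ℂ + 1) ^ 2) w ((Complex.exp w + 1) ^ 2) := fun w => by
    have h := (hasAbsSumAt_exp w).add (by simpa using hasAbsSumAt_C (1 : ℂ) w)
    simpa [sq] using h.mul h
  have hball : ∀ w ∈ Metric.ball (0 : ℂ) NNReal.pi, Complex.exp w + 1 ≠ 0 := fun w hw =>
    Complex.exp_add_one_ne_zero_of_norm_lt_pi (by simpa using hw)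
  have h := hasSum_coeff_of_mul_eq hmul (pow_ne_zero 2 (exp_add_one_ne_zero ℂ))
    (f := fun w => -2 * Complex.exp w / (Complex.exp w + 1) ^ 2)
    (fun w hw => (((Complex.differentiable_exp w).const_mul (-2)).div
      (((Complex.differentiable_exp w).add_const 1).pow 2)
      (pow_ne_zero 2 (hball w hw))).differentiableWithinAt)
    (fun w _ => hsq w) (fun w _ => ((hasAbsSumAt_C _ w).mul (hasAbsSumAt_exp w)).1)
    (fun w hw => by field_simp [hball w hw]; simp) (z := z) (by simpa using hz)
  simpa [coeff_map, coeff_derivative_eulerSeries] using h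

/-- generating series of odd Euler polynomial values at 0. -/
theorem euler_sech_series (t : ℝ) (ht : |t| < π) :
    HasSum (fun r : ℕ => (eulerZero (2 * r + 1) : ℝ) * t ^ (2 * r) / (2 * r).factorial)
      (-(1/2) * sech (t/2) ^ 2) := by
  have hℂ := hasSum_eulerZero_succ (z := (t : ℂ)) (by simpa using ht)
  have hℝ : HasSum (fun n => (eulerZero (n + 1) : ℝ) / n.factorial * t ^ n)
      (-(1/2) * sech (t/2) ^ 2) := by
    rw [sech_half_sq]
    refine Complex.hasSum_ofReal.mp ?_
    convert hℂ using 1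
    · ext n
      push_cast
      ring
    · push_cast
      ring
  refine (hℝ.comp_two_mul_of_odd_eq_zero fun k => ?_).congr_fun fun r => by ring
  rw [eulerZero_eq_zero_of_even ⟨k + 1, by ring⟩ (by omega)]
  simp

end
end

section
/- For every nonnegative integer j, ∫_0^∞ z^{2j+1}/sinh(πz) dz = (−1)^{j+1} · E_{2j+1}(0)/2. -/
open Complex MeasureTheory
open scoped Real

noncomputable section

/-!
Expanding `1 / sinh (π z) = 2 ∑ₖ e^{-(2k+1)πz}` and integrating termwise against `z ^ n` gives
`2 n! π^{-(n+1)} ∑ₖ (2k+1)^{-(n+1)}`, which for `n + 1 = 2j + 2` is `(1 - 2^{-(2j+2)}) ζ(2j+2)`,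
i.e. Euler's value in terms of `B_{2j+2}`. On the other side, `2 / (e^X + 1)` is
`(2 B(X) - 2 B(2X)) / X` with `B(X) = X / (e^X - 1)`, so that
`E_n(0) = 2 (1 - 2^{n+1}) B_{n+1} / (n+1)`.
-/

open Set
open scoped Nat

namespace PowerSeries

theorem X_mul_C_two_mul_inv_exp_add_one :
    X * (C 2 * (exp ℚ + 1)⁻¹) =
      C 2 * (bernoulliPowerSeries ℚ - rescale 2 (bernoulliPowerSeries ℚ)) := by
  set B := bernoulliPowerSeries ℚ
  have hB : B * (exp ℚ - 1) = X := bernoulliPowerSeries_mul_exp_sub_one ℚ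
  have hB₂ : rescale 2 B * (exp ℚ ^ 2 - 1) = C 2 * X := by
    rw [exp_pow_eq_rescale_exp, Nat.cast_ofNat, ← map_one (rescale (2 : ℚ)), ← map_sub,
      ← map_mul, hB, rescale_X]
  have hC : (C 2 : ℚ⟦X⟧) = 2 := map_ofNat C 2
  have hsub : exp ℚ - 1 ≠ 0 := fun h => by
    simpa [coeff_exp] using congrArg (coeff 1) h
  have hadd : constantCoeff (exp ℚ + 1) ≠ 0 := by simp
  have key : C 2 * (B - rescale 2 B) * (exp ℚ + 1) = C 2 * X := by
    apply mul_right_cancel₀ hsub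
    linear_combination C 2 * (exp ℚ + 1) * hB - C 2 * hB₂ - C 2 * X * hC
  calc X * (C 2 * (exp ℚ + 1)⁻¹) = C 2 * X * (exp ℚ + 1)⁻¹ := by ring
    _ = C 2 * (B - rescale 2 B) := by
      rw [← key, mul_assoc, PowerSeries.mul_inv_cancel _ hadd, mul_one]

end PowerSeries

open PowerSeries in
theorem eulerZero_eq_bernoulli (n : ℕ) :
    eulerZero n = 2 * (1 - 2 ^ (n + 1)) * bernoulli (n + 1) / (n + 1) := by
  have h := congrArg (coeff (n + 1)) X_mul_C_two_mul_inv_exp_add_one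
  rw [coeff_succ_X_mul] at h
  rw [eulerZero, h, coeff_C_mul, map_sub, coeff_rescale, bernoulliPowerSeries, coeff_mk,
    Nat.factorial_succ]
  simp only [Algebra.algebraMap_self, RingHom.id_apply]
  push_cast
  field_simp

theorem Real.hasSum_inv_sinh {x : ℝ} (hx : 0 < x) :
    HasSum (fun k : ℕ => 2 * Real.exp (-((2 * k + 1) * x))) (Real.sinh x)⁻¹ := by
  have hq₀ : 0 < Real.exp (-x) := Real.exp_pos _
  have hq₁ : Real.exp (-x) ^ 2 < 1 :=
    pow_lt_one₀ hq₀.le (Real.exp_lt_one_iff.mpr (neg_lt_zero.mpr hx)) two_ne_zero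
  have hsinh : (Real.sinh x)⁻¹ = 2 * Real.exp (-x) * (1 - Real.exp (-x) ^ 2)⁻¹ := by
    rw [Real.sinh_eq, Real.exp_neg]
    field_simp
  rw [hsinh]
  refine ((hasSum_geometric_of_lt_one (by positivity) hq₁).mul_left _).congr_fun fun k => ?_
  rw [← pow_mul, ← Real.exp_nat_mul, mul_assoc, ← Real.exp_add]
  push_cast
  ring_nf

theorem integral_Ioi_pow_mul_exp_neg_mul (n : ℕ) {r : ℝ} (hr : 0 < r) :
    ∫ t in Ioi (0 : ℝ), t ^ n * Real.exp (-(r * t)) = n ! / r ^ (n + 1) := by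
  have h := Real.integral_rpow_mul_exp_neg_mul_Ioi (a := n + 1) (by positivity) hr
  rw [add_sub_cancel_right, Real.Gamma_nat_eq_factorial, ← Nat.cast_succ, Real.rpow_natCast,
    div_pow, one_pow, one_div_mul_eq_div] at h
  rw [← h]
  refine setIntegral_congr_fun measurableSet_Ioi fun t _ => ?_
  simp only [Real.rpow_natCast]

theorem hasSum_one_div_odd_pow {p : ℕ} {Z : ℝ} (h : HasSum (fun n : ℕ => 1 / (n : ℝ) ^ p) Z) :
    HasSum (fun k : ℕ => 1 / (2 * k + 1 : ℝ) ^ p) ((1 - (2 ^ p)⁻¹) * Z) := by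
  have heven : HasSum (fun k : ℕ => 1 / ((2 * k : ℕ) : ℝ) ^ p) ((2 ^ p)⁻¹ * Z) :=
    (h.mul_left _).congr_fun fun k => by
      push_cast
      rw [mul_pow, one_div, one_div, mul_inv]
  obtain ⟨S, hodd⟩ : Summable fun k : ℕ => 1 / ((2 * k + 1 : ℕ) : ℝ) ^ p :=
    h.summable.comp_injective fun a b hab => by omega
  have hS : S = (1 - (2 ^ p)⁻¹) * Z := by
    linarith [h.unique (heven.even_add_odd hodd)]
  rw [← hS]
  exact_mod_cast hodd

theorem hasSum_integral_Ioi_pow_div_sinh {n : ℕ} (hn : n ≠ 0) {a : ℝ} (ha : 0 < a) :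
    HasSum (fun k : ℕ => 2 * n ! / ((2 * k + 1) * a) ^ (n + 1))
      (∫ z in Ioi 0, z ^ n / Real.sinh (a * z)) := by
  set F : ℕ → ℝ → ℝ := fun k z => 2 * (z ^ n * Real.exp (-((2 * k + 1) * a * z)))
  have hF (k : ℕ) : ∫ z in Ioi 0, F k z = 2 * n ! / ((2 * k + 1) * a) ^ (n + 1) := by
    rw [integral_const_mul, integral_Ioi_pow_mul_exp_neg_mul n (by positivity), mul_div_assoc]
  have hint (k : ℕ) : IntegrableOn (F k) (Ioi 0) :=
    Integrable.of_integral_ne_zero (by rw [hF k]; positivity)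
  have hnorm (k : ℕ) : ∫ z in Ioi 0, ‖F k z‖ = ∫ z in Ioi 0, F k z :=
    setIntegral_congr_fun measurableSet_Ioi fun z hz =>
      Real.norm_of_nonneg (by have := (mem_Ioi.mp hz).le; positivity)
  have hsum : Summable fun k : ℕ => 2 * n ! / ((2 * k + 1) * a) ^ (n + 1) := by
    have hodd : Summable fun k : ℕ => 1 / ((2 * k + 1 : ℕ) : ℝ) ^ (n + 1) :=
      (Real.summable_one_div_nat_pow.mpr (by omega)).comp_injective fun a b hab => by omega
    refine (hodd.mul_left (2 * n ! / a ^ (n + 1))).congr fun k => ?_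
    push_cast
    rw [mul_pow]
    field_simp
  have hpoint : ∀ z ∈ Ioi (0 : ℝ), ∑' k, F k z = z ^ n / Real.sinh (a * z) := by
    intro z hz
    rw [div_eq_mul_inv, ← ((Real.hasSum_inv_sinh (mul_pos ha hz)).mul_left (z ^ n)).tsum_eq]
    exact tsum_congr fun k => by simp only [F]; ring_nf
  rw [← setIntegral_congr_fun measurableSet_Ioi hpoint]
  simpa only [hF] using
    hasSum_integral_of_summable_integral_norm hint (by simpa only [hnorm, hF] using hsum)

/-- the Euler integral. -/
theorem euler_integral (j : ℕ) :
    ∫ z in Set.Ioi (0 : ℝ), z ^ (2 * j + 1) / Real.sinh (π * z) =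
      (-1 : ℝ) ^ (j + 1) * (eulerZero (2 * j + 1) : ℝ) / 2 := by
  have hodd := hasSum_one_div_odd_pow (hasSum_zeta_nat (k := j + 1) (by omega))
  rw [show 2 * (j + 1) = 2 * j + 1 + 1 by ring, Nat.add_sub_cancel] at hodd
  have hint := hasSum_integral_Ioi_pow_div_sinh (n := 2 * j + 1) (by omega) Real.pi_pos
  have hscale (k : ℕ) : 2 * (2 * j + 1)! / ((2 * k + 1) * π) ^ (2 * j + 1 + 1) =
      2 * (2 * j + 1)! / π ^ (2 * j + 1 + 1) * (1 / (2 * k + 1) ^ (2 * j + 1 + 1)) := by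
    rw [mul_pow]
    field_simp
  rw [hint.unique ((hodd.mul_left _).congr_fun hscale), eulerZero_eq_bernoulli,
    Nat.factorial_succ (2 * j + 1)]
  push_cast
  field_simp
  ring

end
end
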